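/- arXiv:2201.08507 — 2 statements merged into one kernel-verified Lean document; each statement's English description precedes it below -/
import Mathlib

section
/- Suppose a nonnegative sequence {a(t)} satisfies ∑_{t=1}^K a(t) z^{-t} ≤ B + c · ∑_{t=1}^K z^{-t} for all K ≥ 1 and all z ∈ (z̄, 1), where B, c > 0 and 0 ≤ z̄ < 1. Then for every t ≥ 1, a(t) ≤ B · z̄^t + c/(1 − z̄). -/
/-!
Keeping only the `t`-th term of the sum with `K = t` and bounding the geometric sum
`∑_{s ≤ t} z^{-s}` by `z^{-t} / (1 - z)` gives `a t ≤ B z^t + c / (1 - z)` for every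
`z ∈ (z̄, 1)`; the right side is continuous at `z̄`, so letting `z ↓ z̄` gives the claim.
-/

open Finset Set

theorem geom_sum_Icc_one_div_le {𝕜 : Type*} [Field 𝕜] [LinearOrder 𝕜] [IsStrictOrderedRing 𝕜]
    {z : 𝕜} (hz0 : 0 < z) (hz1 : z < 1) (t : ℕ) :
    ∑ s ∈ Icc 1 t, (1 / z) ^ s ≤ (1 / z) ^ t / (1 - z) := by
  have hw : 1 < 1 / z := by rw [lt_div_iff₀ hz0]; simpa
  have hratio : (1 / z) ^ t / (1 - z) = (1 / z) ^ (t + 1) / (1 / z - 1) := by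
    rw [pow_succ, mul_div_assoc, div_eq_mul_one_div _ (1 - z)]
    congr 1
    field_simp [hz0.ne', (sub_pos.mpr hz1).ne']
  rw [← Finset.Ico_add_one_right_eq_Icc, geom_sum_Ico hw.ne' (by omega), hratio]
  gcongr
  simp [hz0.le]

theorem le_of_ztransform_le {a : ℕ → ℝ} (ha : ∀ t, 0 ≤ a t) {B c z : ℝ} (hc : 0 ≤ c)
    (hz0 : 0 < z) (hz1 : z < 1) {t : ℕ} (ht : 1 ≤ t)
    (h : ∑ s ∈ Icc 1 t, a s * (1 / z) ^ s ≤ B + c * ∑ s ∈ Icc 1 t, (1 / z) ^ s) :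
    a t ≤ B * z ^ t + c / (1 - z) := by
  have hterm : a t * (1 / z) ^ t ≤ ∑ s ∈ Icc 1 t, a s * (1 / z) ^ s :=
    single_le_sum (fun s _ => mul_nonneg (ha s) (by positivity)) (mem_Icc.mpr ⟨ht, le_rfl⟩)
  have hscaled : a t * (1 / z) ^ t ≤ B + c * ((1 / z) ^ t / (1 - z)) :=
    calc a t * (1 / z) ^ t ≤ B + c * ∑ s ∈ Icc 1 t, (1 / z) ^ s := hterm.trans h
      _ ≤ B + c * ((1 / z) ^ t / (1 - z)) := by gcongr; exact geom_sum_Icc_one_div_le hz0 hz1 t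
  have hpow : 0 < z ^ t := pow_pos hz0 t
  rw [one_div_pow, ← div_eq_mul_one_div, div_le_iff₀ hpow] at hscaled
  calc a t ≤ (B + c * (1 / z ^ t / (1 - z))) * z ^ t := hscaled
    _ = B * z ^ t + c / (1 - z) := by field_simp

theorem linear_rate_from_ztransform_bound_general (a : ℕ → ℝ) (ha : ∀ t, 0 ≤ a t)
    (B c zbar : ℝ) (hc : 0 < c) (hz0 : 0 ≤ zbar) (hz1 : zbar < 1)
    (h : ∀ K : ℕ, 1 ≤ K → ∀ z : ℝ, zbar < z → z < 1 →
      ∑ t ∈ Finset.Icc 1 K, a t * (1 / z) ^ t ≤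
        B + c * ∑ t ∈ Finset.Icc 1 K, (1 / z) ^ t) :
    ∀ t : ℕ, 1 ≤ t → a t ≤ B * zbar ^ t + c / (1 - zbar) := by
  intro t ht
  have hbound : ∀ z ∈ Ioo zbar 1, a t ≤ B * z ^ t + c / (1 - z) := fun z ⟨hzl, hzr⟩ =>
    le_of_ztransform_le ha hc.le (hz0.trans_lt hzl) hzr ht (h t ht z hzl hzr)
  have hcont : ContinuousAt (fun z : ℝ => B * z ^ t + c / (1 - z)) zbar := by
    have : 1 - zbar ≠ 0 := (sub_pos.mpr hz1).ne'
    fun_prop (disch := exact this)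
  have hmem : zbar ∈ closure (Ioo zbar 1) := by
    rw [closure_Ioo hz1.ne]
    exact ⟨le_rfl, hz1.le⟩
  exact ContinuousWithinAt.closure_le hmem continuousWithinAt_const hcont.continuousWithinAt hbound

/-- Linear convergence up to a constant from a z-transform bound (Lemma 4). -/
theorem linear_rate_from_ztransform_bound (a : ℕ → ℝ) (ha : ∀ t, 0 ≤ a t)
    (B c zbar : ℝ) (hB : 0 < B) (hc : 0 < c) (hz0 : 0 ≤ zbar) (hz1 : zbar < 1)
    (h : ∀ K : ℕ, 1 ≤ K → ∀ z : ℝ, zbar < z → z < 1 →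
      ∑ t ∈ Finset.Icc 1 K, a t * (1 / z) ^ t ≤
        B + c * ∑ t ∈ Finset.Icc 1 K, (1 / z) ^ t) :
    ∀ t : ℕ, 1 ≤ t → a t ≤ B * zbar ^ t + c / (1 - zbar) :=
  linear_rate_from_ztransform_bound_general a ha B c zbar hc hz0 hz1 h
end

section
/- Let θ̂, θ ∈ ℝ^d with ‖θ‖₁ ≤ r and ‖θ̂‖₁ = r, and let S ⊆ {1,…,d} be a set of coordinates with |S| = s such that θ* ∈ ℝ^d is supported on S (i.e., θ*_j = 0 for j ∉ S). Then ‖θ − θ̂‖₁ ≤ 2√s · ‖θ − θ̂‖₂ + 2‖θ̂ − θ*‖₁ + 2√s · ‖θ̂ − θ*‖₂. -/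
/-!
Put `Δ = θ - θ̂` and `ν = θ̂ - θ*`. Off `S` we have `θ̂ = ν`, so `‖θ‖₁ ≤ ‖θ̂‖₁` forces the cone
condition `‖Δ_{Sᶜ}‖₁ ≤ ‖Δ_S‖₁ + 2‖ν_{Sᶜ}‖₁`; hence `‖Δ‖₁ ≤ 2‖Δ_S‖₁ + 2‖ν‖₁`, and Cauchy–Schwarz on
the `s` coordinates of `S` gives `‖Δ_S‖₁ ≤ √s ‖Δ‖₂`.
-/

open Finset

variable {ι : Type*} [Fintype ι]

theorem sum_abs_le_sqrt_card_mul_sqrt_sum_sq (S : Finset ι) (f : ι → ℝ) :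
    ∑ i ∈ S, |f i| ≤ √(#S : ℝ) * √(∑ i, f i ^ 2) := by
  rw [← Real.sqrt_mul (Nat.cast_nonneg _)]
  apply Real.le_sqrt_of_sq_le
  calc (∑ i ∈ S, |f i|) ^ 2 ≤ #S * ∑ i ∈ S, |f i| ^ 2 := sq_sum_le_card_mul_sum_sq
    _ ≤ #S * ∑ i, f i ^ 2 := by
      simp only [sq_abs]
      exact mul_le_mul_of_nonneg_left (sum_le_univ_sum_of_nonneg fun i => sq_nonneg (f i))
        (Nat.cast_nonneg _)

section Cone

variable [DecidableEq ι] {S : Finset ι} {θstar θhat θ : ι → ℝ}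

theorem sum_compl_abs_sub_le (hsupp : ∀ j ∉ S, θstar j = 0)
    (hl1 : ∑ i, |θ i| ≤ ∑ i, |θhat i|) :
    ∑ i ∈ Sᶜ, |θ i - θhat i| ≤
      ∑ i ∈ S, |θ i - θhat i| + 2 * ∑ i ∈ Sᶜ, |θhat i - θstar i| := by
  have hoff : ∑ i ∈ Sᶜ, |θhat i - θstar i| = ∑ i ∈ Sᶜ, |θhat i| :=
    sum_congr rfl fun i hi => by rw [hsupp i (mem_compl.1 hi), sub_zero]
  have htri : ∑ i ∈ Sᶜ, |θ i - θhat i| ≤ ∑ i ∈ Sᶜ, |θ i| + ∑ i ∈ Sᶜ, |θhat i| := by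
    rw [← sum_add_distrib]
    exact sum_le_sum fun i _ => abs_sub _ _
  have hon : ∑ i ∈ S, |θhat i| - ∑ i ∈ S, |θ i| ≤ ∑ i ∈ S, |θ i - θhat i| := by
    rw [← sum_sub_distrib]
    exact sum_le_sum fun i _ => abs_sub_comm (θ i) (θhat i) ▸ abs_sub_abs_le_abs_sub _ _
  rw [← sum_add_sum_compl S, ← sum_add_sum_compl S (fun i => |θhat i|)] at hl1
  linarith

theorem sum_abs_sub_le_of_sum_abs_le (hsupp : ∀ j ∉ S, θstar j = 0)
    (hl1 : ∑ i, |θ i| ≤ ∑ i, |θhat i|) :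
    ∑ i, |θ i - θhat i| ≤
      2 * ∑ i ∈ S, |θ i - θhat i| + 2 * ∑ i, |θhat i - θstar i| := by
  have hcone := sum_compl_abs_sub_le hsupp hl1
  have hsplit := sum_add_sum_compl S fun i => |θ i - θhat i|
  have hν : ∑ i ∈ Sᶜ, |θhat i - θstar i| ≤ ∑ i, |θhat i - θstar i| :=
    sum_le_univ_sum_of_nonneg fun _ => abs_nonneg _
  linarith

end Cone

theorem l1_ball_approx_sparsity_general (d s : ℕ) (r : ℝ)
    (θstar θhat θ : Fin d → ℝ) (S : Finset (Fin d)) (hS : S.card = s)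
    (hsupp : ∀ j ∉ S, θstar j = 0)
    (hθ : ∑ i, |θ i| ≤ r) (hθhat : ∑ i, |θhat i| = r) :
    ∑ i, |θ i - θhat i| ≤
      2 * Real.sqrt s * Real.sqrt (∑ i, (θ i - θhat i) ^ 2) +
        (2 * ∑ i, |θhat i - θstar i| +
          2 * Real.sqrt s * Real.sqrt (∑ i, (θhat i - θstar i) ^ 2)) := by
  have hcone := sum_abs_sub_le_of_sum_abs_le hsupp (hθ.trans hθhat.ge)
  have hCS := sum_abs_le_sqrt_card_mul_sqrt_sum_sq S fun i => θ i - θhat i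
  rw [hS] at hCS
  have hslack : 0 ≤ 2 * √(s : ℝ) * √(∑ i, (θhat i - θstar i) ^ 2) := by positivity
  linarith

/-- Approximate sparsity of feasible points of the ℓ₁-constrained LASSO (Lemma 1). -/
theorem l1_ball_approx_sparsity (d s : ℕ) (r : ℝ) (hr : 0 < r)
    (θstar θhat θ : Fin d → ℝ) (S : Finset (Fin d)) (hS : S.card = s)
    (hsupp : ∀ j ∉ S, θstar j = 0)
    (hθ : ∑ i, |θ i| ≤ r) (hθhat : ∑ i, |θhat i| = r) :
    ∑ i, |θ i - θhat i| ≤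
      2 * Real.sqrt s * Real.sqrt (∑ i, (θ i - θhat i) ^ 2) +
        (2 * ∑ i, |θhat i - θstar i| +
          2 * Real.sqrt s * Real.sqrt (∑ i, (θhat i - θstar i) ^ 2)) :=
  l1_ball_approx_sparsity_general d s r θstar θhat θ S hS hsupp hθ hθhat
end
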